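/- arXiv:1110.6130 — 2 statements merged into one kernel-verified Lean document; each statement's English description precedes it below -/
import Mathlib

section
/- For every n ∈ ℕ with n ≥ 1, the function ψ(t) = (1/(t²-1))·(d/dt)^{n-1}[(t²-1)ⁿ] is a polynomial in t of degree n-1 and satisfies the differential equation (1/2)(t²-1)ψ'' + 2tψ' - (1/2)(n-1)(n+2)ψ = 0. -/
/-!
Write `S = X² - 1` and `Q = Sⁿ`. Differentiating `S Q' = 2n X Q` another `k + 1` times by
Leibniz gives a three-term recurrence for the derivatives `Q⁽ᵏ⁾`, and at `k = n - 1` it collapses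
to `S Q⁽ⁿ⁺¹⁾ = n(n+1) Q⁽ⁿ⁻¹⁾`. Since `S ∣ Q⁽ⁿ⁻¹⁾`, writing `Q⁽ⁿ⁻¹⁾ = S P` and expanding `(S P)''`
leaves, after cancelling `S`, the equation `S P'' + 4X P' = (n(n+1) - 2) P = (n-1)(n+2) P`.
The degree of `P` is `2n - (n-1) - 2 = n - 1`.
-/

open Polynomial

namespace Polynomial

theorem natDegree_iterate_derivative_eq {R : Type*} [Semiring R] [IsAddTorsionFree R]
    (p : R[X]) (k : ℕ) : (derivative^[k] p).natDegree = p.natDegree - k := by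
  induction k with
  | zero => rfl
  | succ k ih => rw [Function.iterate_succ_apply', natDegree_derivative, ih, Nat.sub_sub]

theorem iteratedDeriv_eval {𝕜 : Type*} [NontriviallyNormedField 𝕜] (p : 𝕜[X]) (k : ℕ) :
    iteratedDeriv k (fun x => p.eval x) = fun x => (derivative^[k] p).eval x := by
  induction k with
  | zero => simp
  | succ k ih =>
    ext x
    rw [iteratedDeriv_succ, ih, Function.iterate_succ_apply', Polynomial.deriv]

section CommRing

variable {R : Type*} [CommRing R]

theorem sq_sub_one_mul_derivative_pow (n : ℕ) :
    (X ^ 2 - 1 : R[X]) * derivative ((X ^ 2 - 1) ^ n) = 2 * (n : R[X]) * X * (X ^ 2 - 1) ^ n := by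
  cases n with
  | zero => simp
  | succ n =>
    rw [derivative_pow_succ]
    simp only [derivative_sub, derivative_X_sq, derivative_one, map_add, map_one, map_natCast,
      map_ofNat]
    push_cast
    ring

theorem iterate_derivative_recurrence_of_sq_sub_one_mul_derivative {Q : R[X]} {n : ℕ}
    (hQ : (X ^ 2 - 1) * derivative Q = 2 * (n : R[X]) * X * Q) (k : ℕ) :
    (X ^ 2 - 1) * derivative^[k + 2] Q + 2 * ((k : R[X]) + 1) * X * derivative^[k + 1] Q +
        (k * (k + 1) : R[X]) * derivative^[k] Q =
      2 * (n : R[X]) * X * derivative^[k + 1] Q + (2 * n * (k + 1) : R[X]) * derivative^[k] Q := by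
  induction k with
  | zero =>
    have h := congrArg derivative hQ
    simp only [derivative_mul, derivative_sub, derivative_X_sq, map_ofNat, derivative_one,
      derivative_X, derivative_natCast, derivative_ofNat] at h
    simp only [Function.iterate_succ_apply', Function.iterate_zero_apply, Nat.cast_zero]
    linear_combination h
  | succ k ih =>
    have h := congrArg derivative ih
    simp only [derivative_mul, derivative_add, derivative_sub, derivative_X_sq, map_ofNat,
      derivative_one, derivative_X, derivative_natCast, derivative_ofNat] at h
    simp only [Function.iterate_succ_apply'] at h ⊢
    push_cast
    linear_combination h

theorem sq_sub_one_mul_iterate_derivative_pow_succ (m : ℕ) :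
    (X ^ 2 - 1 : R[X]) * derivative^[m + 2] ((X ^ 2 - 1) ^ (m + 1)) =
      ((m + 1) * (m + 2) : R[X]) * derivative^[m] ((X ^ 2 - 1) ^ (m + 1)) := by
  have h := iterate_derivative_recurrence_of_sq_sub_one_mul_derivative
    (sq_sub_one_mul_derivative_pow (R := R) (m + 1)) m
  push_cast at h
  linear_combination h

variable (R) in
/-- The paper's `Pₙ`; the division is exact by `sq_sub_one_mul_rodriguesQuotient`. -/
noncomputable def rodriguesQuotient (n : ℕ) : R[X] :=
  derivative^[n - 1] ((X ^ 2 - 1) ^ n) /ₘ (X ^ 2 - 1)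

theorem monic_X_sq_sub_one : (X ^ 2 - 1 : R[X]).Monic := by
  simpa using monic_X_pow_sub_C (1 : R) two_ne_zero

theorem sq_sub_one_mul_rodriguesQuotient (m : ℕ) :
    (X ^ 2 - 1 : R[X]) * rodriguesQuotient R (m + 1) = derivative^[m] ((X ^ 2 - 1) ^ (m + 1)) := by
  have hdvd : (X ^ 2 - 1 : R[X]) ∣ derivative^[m] ((X ^ 2 - 1) ^ (m + 1)) := by
    simpa using pow_sub_dvd_iterate_derivative_pow (X ^ 2 - 1 : R[X]) (m + 1) m
  rw [rodriguesQuotient, Nat.add_sub_cancel]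
  have h := modByMonic_add_div (derivative^[m] ((X ^ 2 - 1 : R[X]) ^ (m + 1))) (X ^ 2 - 1)
  rwa [(modByMonic_eq_zero_iff_dvd monic_X_sq_sub_one).2 hdvd, zero_add] at h

variable [IsDomain R]

theorem rodriguesQuotient_differential_equation (m : ℕ) :
    (X ^ 2 - 1) * derivative (derivative (rodriguesQuotient R (m + 1))) +
        4 * X * derivative (rodriguesQuotient R (m + 1)) =
      (m * (m + 3) : R[X]) * rodriguesQuotient R (m + 1) := by
  have h := sq_sub_one_mul_iterate_derivative_pow_succ (R := R) m
  rw [Function.iterate_succ_apply', Function.iterate_succ_apply',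
    ← sq_sub_one_mul_rodriguesQuotient] at h
  simp only [derivative_mul, derivative_add, derivative_sub, derivative_X_sq, map_ofNat,
    derivative_one, derivative_X, derivative_ofNat, map_zero] at h
  apply mul_left_cancel₀ monic_X_sq_sub_one.ne_zero
  linear_combination h

theorem degree_rodriguesQuotient [CharZero R] (m : ℕ) :
    (rodriguesQuotient R (m + 1)).degree = m := by
  have hS : (X ^ 2 - 1 : R[X]).natDegree = 2 := by compute_degree!
  have hD : (derivative^[m] ((X ^ 2 - 1 : R[X]) ^ (m + 1))).natDegree = m + 2 := by
    rw [natDegree_iterate_derivative_eq, natDegree_pow, hS]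
    omega
  have hD0 : derivative^[m] ((X ^ 2 - 1 : R[X]) ^ (m + 1)) ≠ 0 :=
    ne_zero_of_natDegree_gt (n := 0) (by omega)
  rw [← sq_sub_one_mul_rodriguesQuotient] at hD hD0
  have hP0 := right_ne_zero_of_mul hD0
  rw [natDegree_mul monic_X_sq_sub_one.ne_zero hP0, hS] at hD
  rw [degree_eq_natDegree hP0]
  norm_cast
  omega

end CommRing

end Polynomial

/-- Rodrigues-type formula: for `n ≥ 1`, the function
`ψ(t) = (t²-1)⁻¹ (d/dt)^{n-1}[(t²-1)ⁿ]` is a polynomial of degree `n-1`, and it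
satisfies `(1/2)(t²-1)ψ'' + 2tψ' - (1/2)(n-1)(n+2)ψ = 0`. -/
theorem rodrigues_formula_solution (n : ℕ) (hn : 1 ≤ n) :
    ∃ P : Polynomial ℝ, P.degree = (n - 1 : ℕ) ∧
      (∀ t : ℝ, iteratedDeriv (n - 1) (fun s : ℝ => (s ^ 2 - 1) ^ n) t =
        (t ^ 2 - 1) * P.eval t) ∧
      (∀ t : ℝ,
        (1 / 2) * (t ^ 2 - 1) * deriv (deriv (fun s : ℝ => P.eval s)) t +
          2 * t * deriv (fun s : ℝ => P.eval s) t -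
          (1 / 2) * ((n : ℝ) - 1) * ((n : ℝ) + 2) * P.eval t = 0) := by
  obtain ⟨m, rfl⟩ := Nat.exists_eq_add_of_le' hn
  set P := rodriguesQuotient ℝ (m + 1)
  have hP' : deriv (fun s : ℝ => P.eval s) = fun s => (derivative P).eval s :=
    funext fun s => P.deriv
  refine ⟨P, degree_rodriguesQuotient m, fun t => ?_, fun t => ?_⟩
  · have hQ : (fun s : ℝ => (s ^ 2 - 1) ^ (m + 1)) =
        fun s => ((X ^ 2 - 1) ^ (m + 1) : ℝ[X]).eval s := by
      simp
    rw [Nat.add_sub_cancel, hQ, iteratedDeriv_eval, ← sq_sub_one_mul_rodriguesQuotient]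
    simp [P]
  · have h := congrArg (eval t) (rodriguesQuotient_differential_equation (R := ℝ) m)
    simp only [eval_add, eval_mul, eval_sub, eval_pow, eval_X, eval_one, eval_ofNat,
      eval_natCast] at h
    rw [hP', Polynomial.deriv]
    push_cast
    linear_combination (1 / 2 : ℝ) * h
end

section
/- For every a, b ∈ ℂ and integer k ≥ 1, the iterated integral ∬ (at+b)^k/(t²-1) dt dt lies in the algebra ℂ[t, arctanh(1/t), log(t²-1)], i.e. there exists a polynomial expression F in t, arctanh(1/t), and log(t²-1) with ∂²F/∂t² = (at+b)^k/(t²-1) on the domain t > 1. -/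
/-!
With `U = artanh (1 / t)` and `L = log (t² - 1)` one has `U' = -1 / (t² - 1)` and
`L' = 2t / (t² - 1)`, so `-(t U + L / 2)` and `(t L - 2t + 2U) / 2` are explicit second
antiderivatives of `1 / (t² - 1)` and `t / (t² - 1)`. Second derivatives of polynomials in
`t, U, L` form a `ℂ`-subspace containing all powers of `t`, and
`t ^ (n + 2) / (t² - 1) = t ^ n + t ^ n / (t² - 1)`; expanding `(a t + b) ^ k` binomially
finishes the proof.
-/

open MvPolynomial Set

/-- `artanhInv s = artanh (1 / s)` for `s > 1`. -/
noncomputable def artanhInv (s : ℝ) : ℝ := 1 / 2 * Real.log ((s + 1) / (s - 1))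

noncomputable def polylogEval (P : MvPolynomial (Fin 3) ℂ) (s : ℝ) : ℂ :=
  eval ![(s : ℂ), (artanhInv s : ℂ), (Real.log (s ^ 2 - 1) : ℂ)] P

lemma hasDerivAt_artanhInv {t : ℝ} (ht : 1 < t) :
    HasDerivAt artanhInv (-1 / (t ^ 2 - 1)) t := by
  have h₁ : t - 1 ≠ 0 := by linarith
  have h₂ : (t + 1) / (t - 1) ≠ 0 := (div_pos (by linarith) (by linarith)).ne'
  refine ((((hasDerivAt_id t).add_const 1).div ((hasDerivAt_id t).sub_const 1) h₁).log h₂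
    |>.const_mul (1 / 2)).congr_deriv ?_
  have h₃ : t + 1 ≠ 0 := by linarith
  have h₄ : t ^ 2 - 1 ≠ 0 := by nlinarith
  simp only [id_eq, Pi.div_apply]
  field_simp
  ring

lemma hasDerivAt_ofReal_artanhInv {t : ℝ} (ht : 1 < t) :
    HasDerivAt (fun s : ℝ => (artanhInv s : ℂ)) (-1 / ((t : ℂ) ^ 2 - 1)) t := by
  simpa using (hasDerivAt_artanhInv ht).ofReal_comp

lemma hasDerivAt_ofReal_log_sq_sub_one {t : ℝ} (ht : 1 < t) :
    HasDerivAt (fun s : ℝ => (Real.log (s ^ 2 - 1) : ℂ)) (2 * t / ((t : ℂ) ^ 2 - 1)) t := by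
  simpa using (((hasDerivAt_pow 2 t).sub_const 1).log (by nlinarith)).ofReal_comp

lemma hasDerivAt_ofReal (t : ℝ) : HasDerivAt (fun s : ℝ => (s : ℂ)) 1 t := by
  simpa using (hasDerivAt_id (t : ℂ)).comp_ofReal

lemma sq_sub_one_ne_zero {t : ℝ} (ht : 1 < t) : (t : ℂ) ^ 2 - 1 ≠ 0 := by
  exact_mod_cast (by nlinarith : t ^ 2 - 1 ≠ 0)

def polylogSecondDerivs : Submodule ℂ (ℝ → ℂ) where
  carrier := {f | ∃ P g, (∀ t, 1 < t → HasDerivAt (polylogEval P) (g t) t) ∧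
    ∀ t, 1 < t → HasDerivAt g (f t) t}
  add_mem' := by
    rintro f₁ f₂ ⟨P₁, g₁, hP₁, hg₁⟩ ⟨P₂, g₂, hP₂, hg₂⟩
    refine ⟨P₁ + P₂, g₁ + g₂, fun t ht => ?_, fun t ht => (hg₁ t ht).add (hg₂ t ht)⟩
    exact (hP₁ t ht).add (hP₂ t ht) |>.congr_of_eventuallyEq
      (.of_forall fun s => map_add (eval _) P₁ P₂)
  zero_mem' := by
    refine ⟨0, 0, fun t _ => ?_, fun t _ => hasDerivAt_const t (0 : ℂ)⟩
    exact (hasDerivAt_const t (0 : ℂ)).congr_of_eventuallyEq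
      (.of_forall fun _ => map_zero (eval _))
  smul_mem' := by
    rintro c f ⟨P, g, hP, hg⟩
    refine ⟨C c * P, c • g, fun t ht => ?_, fun t ht => (hg t ht).const_smul c⟩
    exact (hP t ht).const_mul c |>.congr_of_eventuallyEq
      (.of_forall fun s => by simp [polylogEval])

namespace polylogSecondDerivs

lemma mem_of_eqOn {f g : ℝ → ℂ} (hf : f ∈ polylogSecondDerivs) (hfg : EqOn f g (Ioi 1)) :
    g ∈ polylogSecondDerivs := by
  obtain ⟨P, h, hP, hh⟩ := hf
  exact ⟨P, h, hP, fun t ht => hfg ht ▸ hh t ht⟩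

lemma pow_mem (m : ℕ) : (fun t : ℝ => (t : ℂ) ^ m) ∈ polylogSecondDerivs := by
  have hm₁ : (m : ℂ) + 1 ≠ 0 := by exact_mod_cast m.succ_ne_zero
  have hm₂ : (m : ℂ) + 2 ≠ 0 := by exact_mod_cast (m + 1).succ_ne_zero
  refine ⟨C ((((m : ℂ) + 1) * ((m : ℂ) + 2))⁻¹) * X 0 ^ (m + 2),
    fun t => (t : ℂ) ^ (m + 1) / ((m : ℂ) + 1), fun t _ => ?_, fun t _ => ?_⟩
  · refine ((hasDerivAt_pow (m + 2) (t : ℂ)).comp_ofReal.const_mul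
      (((m + 1) * (m + 2))⁻¹ : ℂ)).congr_of_eventuallyEq
      (.of_forall fun s => by simp [polylogEval]) |>.congr_deriv ?_
    push_cast
    field_simp
  · refine ((hasDerivAt_pow (m + 1) (t : ℂ)).comp_ofReal.div_const _).congr_deriv ?_
    push_cast
    field_simp

lemma inv_sq_sub_one_mem : (fun t : ℝ => 1 / ((t : ℂ) ^ 2 - 1)) ∈ polylogSecondDerivs := by
  refine ⟨-(X 0 * X 1 + C (1 / 2) * X 2), fun t => -(artanhInv t : ℂ), fun t ht => ?_,
    fun t ht => ?_⟩
  · refine (((hasDerivAt_ofReal t).mul (hasDerivAt_ofReal_artanhInv ht)).add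
      ((hasDerivAt_ofReal_log_sq_sub_one ht).const_mul (1 / 2 : ℂ))).neg.congr_of_eventuallyEq
      (.of_forall fun s => by simp [polylogEval]) |>.congr_deriv ?_
    have := sq_sub_one_ne_zero ht
    field_simp
    ring
  · exact (hasDerivAt_ofReal_artanhInv ht).neg.congr_deriv (by ring)

lemma div_sq_sub_one_mem : (fun t : ℝ => t / ((t : ℂ) ^ 2 - 1)) ∈ polylogSecondDerivs := by
  refine ⟨C (1 / 2) * (X 0 * X 2 - C 2 * X 0 + C 2 * X 1),
    fun t => 1 / 2 * (Real.log (t ^ 2 - 1) : ℂ), fun t ht => ?_, fun t ht => ?_⟩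
  · refine ((((hasDerivAt_ofReal t).mul (hasDerivAt_ofReal_log_sq_sub_one ht)).sub
      ((hasDerivAt_ofReal t).const_mul 2)).add
      ((hasDerivAt_ofReal_artanhInv ht).const_mul 2)).const_mul (1 / 2 : ℂ)
      |>.congr_of_eventuallyEq (.of_forall fun s => by simp [polylogEval]) |>.congr_deriv ?_
    have := sq_sub_one_ne_zero ht
    field_simp
    ring
  · refine ((hasDerivAt_ofReal_log_sq_sub_one ht).const_mul (1 / 2 : ℂ)).congr_deriv ?_
    field_simp

lemma pow_div_sq_sub_one_mem (n : ℕ) :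
    (fun t : ℝ => (t : ℂ) ^ n / ((t : ℂ) ^ 2 - 1)) ∈ polylogSecondDerivs := by
  induction n using Nat.twoStepInduction with
  | zero => simpa using inv_sq_sub_one_mem
  | one => simpa using div_sq_sub_one_mem
  | more n ih _ =>
    refine mem_of_eqOn (add_mem (pow_mem n) ih) fun t ht => ?_
    have := sq_sub_one_ne_zero ht
    simp only [Pi.add_apply]
    field_simp
    ring

lemma add_pow_div_sq_sub_one_mem (a b : ℂ) (k : ℕ) :
    (fun t : ℝ => (a * t + b) ^ k / ((t : ℂ) ^ 2 - 1)) ∈ polylogSecondDerivs := by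
  have hexpand : (fun t : ℝ => (a * t + b) ^ k / ((t : ℂ) ^ 2 - 1)) =
      ∑ j ∈ Finset.range (k + 1), (a ^ j * b ^ (k - j) * k.choose j) •
        fun t : ℝ => (t : ℂ) ^ j / ((t : ℂ) ^ 2 - 1) := by
    funext t
    simp only [add_pow, Finset.sum_div, Finset.sum_apply, Pi.smul_apply, smul_eq_mul]
    refine Finset.sum_congr rfl fun j _ => ?_
    ring
  rw [hexpand]
  exact sum_mem fun j _ => Submodule.smul_mem _ _ (pow_div_sq_sub_one_mem j)

end polylogSecondDerivs

theorem double_integral_in_polylog_algebra_general (a b : ℂ) (k : ℕ) :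
    ∃ P : MvPolynomial (Fin 3) ℂ,
      (∀ t : ℝ, 1 < t → DifferentiableAt ℝ
        (fun s : ℝ => MvPolynomial.eval
          (![(s : ℂ),
             (((1 / 2) * Real.log ((s + 1) / (s - 1)) : ℝ) : ℂ),
             ((Real.log (s ^ 2 - 1) : ℝ) : ℂ)]) P) t) ∧
      (∀ t : ℝ, 1 < t → HasDerivAt
        (deriv (fun s : ℝ => MvPolynomial.eval
          (![(s : ℂ),
             (((1 / 2) * Real.log ((s + 1) / (s - 1)) : ℝ) : ℂ),
             ((Real.log (s ^ 2 - 1) : ℝ) : ℂ)]) P))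
        ((a * (t : ℂ) + b) ^ k / ((t : ℂ) ^ 2 - 1)) t) := by
  obtain ⟨P, g, hP, hg⟩ := polylogSecondDerivs.add_pow_div_sq_sub_one_mem a b k
  refine ⟨P, fun t ht => (hP t ht).differentiableAt, fun t ht => ?_⟩
  refine (hg t ht).congr_of_eventuallyEq ?_
  filter_upwards [Ioi_mem_nhds ht] with s hs using (hP s hs).deriv

/-- Twice antidifferentiating `(at+b)^k/(t²-1)` stays inside the algebra
`ℂ[t, arctanh(1/t), log(t²-1)]`: there is a polynomial expression `F` in `t`,
`arctanh(1/t) = (1/2)log((t+1)/(t-1))` and `log(t²-1)` whose second derivative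
is `(at+b)^k/(t²-1)` on `t > 1`. -/
theorem double_integral_in_polylog_algebra (a b : ℂ) (k : ℕ) (hk : 1 ≤ k) :
    ∃ P : MvPolynomial (Fin 3) ℂ,
      (∀ t : ℝ, 1 < t → DifferentiableAt ℝ
        (fun s : ℝ => MvPolynomial.eval
          (![(s : ℂ),
             (((1 / 2) * Real.log ((s + 1) / (s - 1)) : ℝ) : ℂ),
             ((Real.log (s ^ 2 - 1) : ℝ) : ℂ)]) P) t) ∧
      (∀ t : ℝ, 1 < t → HasDerivAt
        (deriv (fun s : ℝ => MvPolynomial.eval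
          (![(s : ℂ),
             (((1 / 2) * Real.log ((s + 1) / (s - 1)) : ℝ) : ℂ),
             ((Real.log (s ^ 2 - 1) : ℝ) : ℂ)]) P))
        ((a * (t : ℂ) + b) ^ k / ((t : ℂ) ^ 2 - 1)) t) :=
  double_integral_in_polylog_algebra_general a b k
end
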